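/- arXiv:2510.24559 — 3 statements merged into one kernel-verified Lean document; each statement's English description precedes it below -/
import Mathlib

section
/- Let $k$ be a field and $m_1, m_2, r_1, r_2$ positive integers with $m_{12} = \gcd(m_1,m_2)$. Let $k_m := k[\epsilon]/(\epsilon^m)$, where $k_{m_1}$ and $k_{m_2}$ are viewed as $k_{m_{12}}$-algebras via $\epsilon \mapsto \epsilon^{m_1/m_{12}}$ and $\epsilon \mapsto \epsilon^{m_2/m_{12}}$ respectively. Then the $k$-vector space $\mathrm{Hom}_{k_{m_{12}}}(k_{m_1}^{\oplus r_1}, k_{m_2}^{\oplus r_2})$ has dimension $\mathrm{lcm}(m_1,m_2)\cdot r_1 r_2$. -/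
open Polynomial

noncomputable section

variable (k : Type*) [Field k]

/-- The truncated polynomial ring `k_m = k[ε]/(ε^m)`. -/
def km (m : ℕ) : Type _ := Polynomial k ⧸ Ideal.span {(X : Polynomial k) ^ m}

instance (m : ℕ) : CommRing (km k m) := Ideal.Quotient.commRing _
instance (m : ℕ) : Algebra k (km k m) := Ideal.Quotient.algebra k

/-- The class of `ε` in `k_m`. -/
def epsm (m : ℕ) : km k m := Ideal.Quotient.mk _ X

lemma epsm_pow_self (m : ℕ) : epsm k m ^ m = 0 :=
  (show epsm k m ^ m = Ideal.Quotient.mk _ ((X : Polynomial k) ^ m) from (map_pow _ _ _).symm).trans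
    (Ideal.Quotient.eq_zero_iff_mem.mpr (Ideal.subset_span rfl))

/-- The ring homomorphism `k_a → k_b`, `ε ↦ ε^f` (requires `b ≤ f * a`). -/
def truncHom (a b f : ℕ) (h : b ≤ f * a) : km k a →+* km k b :=
  Ideal.Quotient.lift _ (aeval (epsm k b ^ f)).toRingHom (by
    intro p hp
    rw [Ideal.mem_span_singleton] at hp
    obtain ⟨q, rfl⟩ := hp
    have hz : (epsm k b ^ f) ^ a = 0 := by
      rw [← pow_mul, show f * a = b + (f * a - b) from (Nat.add_sub_cancel' h).symm,
        pow_add, epsm_pow_self, zero_mul]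
    simp [map_mul, map_pow, hz])

/-- `(k_b)^r` as a module over `k_a`, via `ε ↦ ε^f`. -/
def compModule (a b f : ℕ) (h : b ≤ f * a) (r : ℕ) :
    Module (km k a) (Fin r → km k b) :=
  Module.compHom _ (truncHom k a b f h)

/-- The space `Hom_{k_{gcd(m₁,m₂)}}(k_{m₁}^{r₁}, k_{m₂}^{r₂})`, where `k_{mᵢ}` is a
`k_{gcd(m₁,m₂)}`-algebra via `ε ↦ ε^{mᵢ/gcd(m₁,m₂)}`. -/
def HomSpace (m1 m2 r1 r2 : ℕ) : Type _ :=
  letI := compModule k (Nat.gcd m1 m2) m1 (m1 / Nat.gcd m1 m2)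
    (le_of_eq (Nat.div_mul_cancel (Nat.gcd_dvd_left m1 m2)).symm) r1
  letI := compModule k (Nat.gcd m1 m2) m2 (m2 / Nat.gcd m1 m2)
    (le_of_eq (Nat.div_mul_cancel (Nat.gcd_dvd_right m1 m2)).symm) r2
  (Fin r1 → km k m1) →ₗ[km k (Nat.gcd m1 m2)] (Fin r2 → km k m2)

instance (m1 m2 r1 r2 : ℕ) : AddCommGroup (HomSpace k m1 m2 r1 r2) :=
  letI := compModule k (Nat.gcd m1 m2) m1 (m1 / Nat.gcd m1 m2)
    (le_of_eq (Nat.div_mul_cancel (Nat.gcd_dvd_left m1 m2)).symm) r1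
  letI := compModule k (Nat.gcd m1 m2) m2 (m2 / Nat.gcd m1 m2)
    (le_of_eq (Nat.div_mul_cancel (Nat.gcd_dvd_right m1 m2)).symm) r2
  (inferInstance :
    (AddCommGroup ((Fin r1 → km k m1) →ₗ[km k (Nat.gcd m1 m2)] (Fin r2 → km k m2))))

instance (m1 m2 r1 r2 : ℕ) : Module k (HomSpace k m1 m2 r1 r2) :=
  letI := compModule k (Nat.gcd m1 m2) m1 (m1 / Nat.gcd m1 m2)
    (le_of_eq (Nat.div_mul_cancel (Nat.gcd_dvd_left m1 m2)).symm) r1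
  letI := compModule k (Nat.gcd m1 m2) m2 (m2 / Nat.gcd m1 m2)
    (le_of_eq (Nat.div_mul_cancel (Nat.gcd_dvd_right m1 m2)).symm) r2
  (Module.compHom
    ((Fin r1 → km k m1) →ₗ[km k (Nat.gcd m1 m2)] (Fin r2 → km k m2))
    (algebraMap k (km k (Nat.gcd m1 m2))) :
    Module k (HomSpace k m1 m2 r1 r2))

/-! Over `k_g` (`g = gcd m₁ m₂`, `ε ↦ ε^{m/g}`), `k_m` is free with basis `1, ε, …, ε^{m/g - 1}`:
the products `ε^{(m/g) j} ε^i` run exactly once over the monomial `k`-basis of `k_m`. So a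
`k_g`-linear map out of `k_{m₁}^{r₁}` is a free choice of images of `r₁ m₁/g` basis vectors in
`k_{m₂}^{r₂}`, which has `k`-dimension `r₂ m₂`, and `(m₁/g) m₂ = lcm m₁ m₂`. -/

namespace Module.Basis

section SMulTower

variable {R A B ι κ : Type*} [CommSemiring R] [Semiring A] [Algebra R A]
  [AddCommMonoid B] [Module R B] [Module A B] [IsScalarTower R A B] [Fintype ι]

-- A converse to `Module.Basis.smulTower`.
def ofSMulTower (c : Basis κ R A) (v : ι → B) (d : Basis (κ × ι) R B)
    (hd : ∀ j i, d (j, i) = c j • v i) : Basis ι A B :=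
  let φ := Fintype.linearCombination A v
  let e := (Pi.basis fun _ : ι => c).equiv d
    ((Equiv.sigmaEquivProd ι κ).trans (Equiv.prodComm ι κ))
  have hφ : φ.restrictScalars R = e.toLinearMap :=
    (Pi.basis fun _ : ι => c).ext fun ⟨i, j⟩ => by
      classical
      rw [LinearEquiv.coe_coe, equiv_apply, Pi.basis_apply, LinearMap.restrictScalars_apply,
        Fintype.linearCombination_apply_single]
      exact (hd j i).symm
  .ofEquivFun (LinearEquiv.ofBijective φ (by
    rw [← LinearMap.coe_restrictScalars R, hφ]; exact e.bijective)).symm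

end SMulTower

section LinearMap

variable {R A M N ι : Type*} [CommSemiring R] [CommSemiring A] [Algebra R A]
  [AddCommMonoid M] [Module A M] [AddCommMonoid N] [Module A N] [Module R N] [IsScalarTower R A N]

def linearMapEquivPiOfAlgebraMap (b : Basis ι A M) :
    letI := Module.compHom (M →ₗ[A] N) (algebraMap R A)
    (M →ₗ[A] N) ≃ₗ[R] (ι → N) :=
  letI := Module.compHom (M →ₗ[A] N) (algebraMap R A)
  (b.constr A).symm.toAddEquiv.toLinearEquiv fun c F => funext fun i => by
    show (algebraMap R A c • F) (b i) = c • F (b i)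
    rw [LinearMap.smul_apply, algebraMap_smul]

end LinearMap

end Module.Basis

def kmPowerBasis (m : ℕ) : PowerBasis k (km k m) :=
  AdjoinRoot.powerBasis (pow_ne_zero m X_ne_zero)

def kmBasis (m : ℕ) : Module.Basis (Fin m) k (km k m) :=
  (kmPowerBasis k m).basis.reindex (finCongr (by simp [kmPowerBasis]))

lemma kmBasis_apply (m : ℕ) (i : Fin m) : kmBasis k m i = epsm k m ^ (i : ℕ) := by
  rw [kmBasis, Module.Basis.reindex_apply, PowerBasis.basis_eq_pow]
  rfl

section Trunc

variable (a b f : ℕ)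

lemma truncHom_epsm (h : b ≤ f * a) :
    truncHom k a b f h (epsm k a) = epsm k b ^ f :=
  (Ideal.Quotient.lift_mk _ _ _).trans (aeval_X _)

lemma truncHom_algebraMap (h : b ≤ f * a) (c : k) :
    truncHom k a b f h (algebraMap k (km k a) c) = algebraMap k (km k b) c :=
  (Ideal.Quotient.lift_mk _ _ _).trans (aeval_C _ _)

lemma truncHom_isScalarTower (h : b ≤ f * a) :
    letI := (truncHom k a b f h).toModule
    IsScalarTower k (km k a) (km k b) :=
  letI := (truncHom k a b f h).toModule
  IsScalarTower.of_algebraMap_smul fun c x => by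
    show truncHom k a b f h (algebraMap k (km k a) c) * x = c • x
    rw [truncHom_algebraMap, Algebra.smul_def]

def truncBasis (hb : b = f * a) :
    letI := (truncHom k a b f hb.le).toModule
    Module.Basis (Fin f) (km k a) (km k b) :=
  letI := (truncHom k a b f hb.le).toModule
  haveI : IsScalarTower k (km k a) (km k b) := truncHom_isScalarTower k a b f hb.le
  .ofSMulTower (kmBasis k a) (fun i => epsm k b ^ (i : ℕ))
    ((kmBasis k b).reindex (finProdFinEquiv.trans (finCongr (hb.trans (mul_comm f a)).symm)).symm)
    fun j i => by
      rw [Module.Basis.reindex_apply, Equiv.symm_symm, kmBasis_apply, kmBasis_apply]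
      show _ = truncHom k a b f hb.le (epsm k a ^ (j : ℕ)) * epsm k b ^ (i : ℕ)
      rw [map_pow, truncHom_epsm, ← pow_mul, ← pow_add]
      congr 1
      simp [finProdFinEquiv_apply_val, add_comm]

end Trunc

theorem finrank_homSpace (m1 m2 r1 r2 : ℕ) :
    Module.finrank k (HomSpace k m1 m2 r1 r2) = Nat.lcm m1 m2 * (r1 * r2) := by
  set g := Nat.gcd m1 m2
  have h1 : m1 = m1 / g * g := (Nat.div_mul_cancel (Nat.gcd_dvd_left m1 m2)).symm
  have h2 : m2 = m2 / g * g := (Nat.div_mul_cancel (Nat.gcd_dvd_right m1 m2)).symm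
  let _ : Module (km k g) (km k m1) := (truncHom k g m1 (m1 / g) h1.le).toModule
  let _ : Module (km k g) (km k m2) := (truncHom k g m2 (m2 / g) h2.le).toModule
  have : IsScalarTower k (km k g) (km k m2) := truncHom_isScalarTower k g m2 (m2 / g) h2.le
  let e : HomSpace k m1 m2 r1 r2 ≃ₗ[k] ((Σ _ : Fin r1, Fin (m1 / g)) → Fin r2 → km k m2) :=
    (Pi.basis fun _ : Fin r1 => truncBasis k g m1 (m1 / g) h1).linearMapEquivPiOfAlgebraMap
      (N := Fin r2 → km k m2)
  calc Module.finrank k (HomSpace k m1 m2 r1 r2)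
      = Module.finrank k ((Σ _ : Fin r1, Fin (m1 / g)) → Fin r2 → km k m2) := e.finrank_eq
    _ = r1 * (m1 / g) * (r2 * m2) := by
        rw [Module.finrank_eq_card_basis (Pi.basis fun _ => Pi.basis fun _ => kmBasis k m2)]
        simp
    _ = Nat.lcm m1 m2 * (r1 * r2) := by
        rw [Nat.lcm, ← Nat.div_mul_right_comm (Nat.gcd_dvd_left m1 m2)]
        ring
end
end

section
/- Let $m_1, m_2, r_1, r_2, \alpha_1, \alpha_2$ be integers with $m_1, m_2, r_1, r_2 \geq 1$, and let $m_{12} = \gcd(m_1, m_2)$. Consider the $\GG_m$-action on $\mathrm{Hom}_k(k^{\oplus m_1 r_1}, k^{\oplus m_2 r_2})$ given by $t \cdot x = \Phi_{m_2,r_2}(t^{\alpha_2}) \, x \, \Phi_{m_1,r_1}(t^{\alpha_1})^{-1}$, where $\Phi_{m,r}(t)$ is the block-diagonal matrix with blocks $t^{m-1}\mathrm{Id}_r, t^{m-2}\mathrm{Id}_r, \ldots, \mathrm{Id}_r$. This action preserves the subspace $\mathrm{Hom}_{k_{m_{12}}}(k_{m_1}^{\oplus r_1}, k_{m_2}^{\oplus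 r_2})$ if and only if $m_{12} = 1$ or $\alpha_1 m_1 = \alpha_2 m_2$. -/
noncomputable section

variable (k : Type*) [Field k]

/-- The subspace `Hom_{k_{m₁₂}}(k_{m₁}^{r₁}, k_{m₂}^{r₂}) ⊆ Hom_k(k^{m₁r₁}, k^{m₂r₂})` in
the bases of `k_{m₁}, k_{m₂}` given by decreasing powers of `ε`: matrices which are
block-upper-triangular and constant along block diagonals, with blocks of row-size `br`
and column-size `bc` (for the Hom-space above, `br = (m₂/m₁₂)·r₂`, `bc = (m₁/m₁₂)·r₁`). -/
def IsTruncMat {nr nc : ℕ} (br bc : ℕ) (x : Matrix (Fin nr) (Fin nc) k) : Prop :=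
  (∀ (q : Fin nr) (p : Fin nc), (p : ℕ) / bc < (q : ℕ) / br → x q p = 0) ∧
  (∀ (q q' : Fin nr) (p p' : Fin nc),
    (q : ℕ) / br + (p' : ℕ) / bc = (q' : ℕ) / br + (p : ℕ) / bc →
    (q : ℕ) % br = (q' : ℕ) % br → (p : ℕ) % bc = (p' : ℕ) % bc → x q p = x q' p')

/-- The `𝔾_m`-action `t • x = t^β Φ_{m₂,r₂}(t^{α₂}) x Φ_{m₁,r₁}(t^{α₁})⁻¹` on
`Hom_k(k^{m₁r₁}, k^{m₂r₂})`, where `Φ_{m,r}(t)` is block-diagonal with blocks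
`t^{m-1}Id_r, …, t·Id_r, Id_r`; written entrywise. -/
def actMat (α2 α1 β : ℤ) (m2 r2 m1 r1 : ℕ) (t : kˣ)
    (x : Matrix (Fin (m2 * r2)) (Fin (m1 * r1)) k) :
    Matrix (Fin (m2 * r2)) (Fin (m1 * r1)) k :=
  fun q p =>
    ((t ^ (β + α2 * ((m2 : ℤ) - 1 - ((q : ℕ) / r2 : ℕ))
        - α1 * ((m1 : ℤ) - 1 - ((p : ℕ) / r1 : ℕ))) : kˣ) : k) * x q p

/-!
On entries the action is a Hadamard product: the `(q, p)` entry is scaled by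
`t ^ (α₂ (m₂ - 1 - ⌊q/r₂⌋) - α₁ (m₁ - 1 - ⌊p/r₁⌋))`. Moving one block down a block diagonal
raises `⌊q/r₂⌋` by `f₂ = m₂/m₁₂` and `⌊p/r₁⌋` by `f₁ = m₁/m₁₂`, so it multiplies the weight by
`t ^ (α₁ f₁ - α₂ f₂)`. If `α₁ m₁ = α₂ m₂` the weights are constant on block diagonals and the
subspace is preserved; if `m₁₂ = 1` there is a single block and the subspace is everything.
Otherwise there are at least two diagonal blocks, and `t = 2` scales the two corner entries of
the block-upper-triangular matrix of ones differently.
-/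

open scoped Matrix

section

variable {k}

theorem Nat.div_eq_mod_mul_div_add_mul_div (q f r : ℕ) :
    q / r = q % (f * r) / r + f * (q / (f * r)) := by
  rw [Nat.mod_mul_left_div_self, mul_comm f r, ← Nat.div_div_eq_div_mul, Nat.mod_add_div]

theorem zpow_two_injective [CharZero k] : Function.Injective fun n : ℤ ↦ (2 : k) ^ n := by
  intro m n h
  have h' : (((2 : ℚ) ^ m : ℚ) : k) = (((2 : ℚ) ^ n : ℚ) : k) := by
    simpa only [Rat.cast_zpow, Rat.cast_ofNat] using h
  exact zpow_right_injective₀ two_pos (by norm_num) (Rat.cast_injective h')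

variable {nr nc br bc : ℕ}

theorem isTruncMat_of_le (hr : nr ≤ br) (hc : nc ≤ bc) (x : Matrix (Fin nr) (Fin nc) k) :
    IsTruncMat k br bc x := by
  have hq (q : Fin nr) : (q : ℕ) < br := q.2.trans_le hr
  have hp (p : Fin nc) : (p : ℕ) < bc := p.2.trans_le hc
  refine ⟨fun q p h => ?_, fun q q' p p' _ hqq' hpp' => ?_⟩
  · simp [Nat.div_eq_of_lt (hq q), Nat.div_eq_of_lt (hp p)] at h
  · rw [Nat.mod_eq_of_lt (hq q), Nat.mod_eq_of_lt (hq q')] at hqq'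
    rw [Nat.mod_eq_of_lt (hp p), Nat.mod_eq_of_lt (hp p')] at hpp'
    rw [Fin.ext hqq', Fin.ext hpp']

theorem IsTruncMat.hadamard {d x : Matrix (Fin nr) (Fin nc) k}
    (hd : ∀ (q q' : Fin nr) (p p' : Fin nc),
      (q : ℕ) / br + (p' : ℕ) / bc = (q' : ℕ) / br + (p : ℕ) / bc →
      (q : ℕ) % br = (q' : ℕ) % br → (p : ℕ) % bc = (p' : ℕ) % bc → d q p = d q' p')
    (hx : IsTruncMat k br bc x) : IsTruncMat k br bc (d ⊙ x) :=
  ⟨fun q p h => by simp [hx.1 q p h],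
    fun q q' p p' hdiag hq hp => by simp [hd q q' p p' hdiag hq hp, hx.2 q q' p p' hdiag hq hp]⟩

def blockTriuOnes (br bc : ℕ) : Matrix (Fin nr) (Fin nc) k :=
  Matrix.of fun q p => if (q : ℕ) / br ≤ (p : ℕ) / bc then 1 else 0

theorem isTruncMat_blockTriuOnes :
    IsTruncMat k br bc (blockTriuOnes (nr := nr) (nc := nc) br bc) := by
  refine ⟨fun q p h => if_neg h.not_ge, fun q q' p p' hdiag _ _ => ?_⟩
  simp only [blockTriuOnes, Matrix.of_apply]
  congr 1
  apply propext
  omega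

theorem mul_div_sub_mul_div_eq_of_mul_eq {α1 α2 : ℤ} {f1 f2 r1 r2 q q' p p' : ℕ}
    (hα : α1 * f1 = α2 * f2)
    (hdiag : q / (f2 * r2) + p' / (f1 * r1) = q' / (f2 * r2) + p / (f1 * r1))
    (hq : q % (f2 * r2) = q' % (f2 * r2)) (hp : p % (f1 * r1) = p' % (f1 * r1)) :
    α2 * (q / r2 : ℕ) - α1 * (p / r1 : ℕ) = α2 * (q' / r2 : ℕ) - α1 * (p' / r1 : ℕ) := by
  rw [Nat.div_eq_mod_mul_div_add_mul_div q f2, Nat.div_eq_mod_mul_div_add_mul_div q' f2,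
    Nat.div_eq_mod_mul_div_add_mul_div p f1, Nat.div_eq_mod_mul_div_add_mul_div p' f1, hq, hp]
  have hdiag' : ((q / (f2 * r2) : ℕ) : ℤ) + (p' / (f1 * r1) : ℕ)
      = (q' / (f2 * r2) : ℕ) + (p / (f1 * r1) : ℕ) := by exact_mod_cast hdiag
  simp only [Nat.cast_add, Nat.cast_mul]
  linear_combination (α2 * f2) * hdiag'
    - (((p / (f1 * r1) : ℕ) : ℤ) - (p' / (f1 * r1) : ℕ)) * hα

theorem isTruncMat_actMat_of_mul_eq {α1 α2 β : ℤ} {f1 f2 m2 r2 m1 r1 : ℕ} {t : kˣ}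
    {x : Matrix (Fin (m2 * r2)) (Fin (m1 * r1)) k} (hα : α1 * f1 = α2 * f2)
    (hx : IsTruncMat k (f2 * r2) (f1 * r1) x) :
    IsTruncMat k (f2 * r2) (f1 * r1) (actMat k α2 α1 β m2 r2 m1 r1 t x) := by
  refine hx.hadamard (d := Matrix.of fun q p =>
    ((t ^ (β + α2 * ((m2 : ℤ) - 1 - ((q : ℕ) / r2 : ℕ))
      - α1 * ((m1 : ℤ) - 1 - ((p : ℕ) / r1 : ℕ))) : kˣ) : k)) fun q q' p p' hdiag hq hp => ?_
  have := mul_div_sub_mul_div_eq_of_mul_eq hα hdiag hq hp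
  simp only [Matrix.of_apply]
  congr 2
  linear_combination -this

theorem zpow_eq_zpow_of_isTruncMat_actMat {α1 α2 β : ℤ} {f1 f2 m2 r2 m1 r1 : ℕ}
    (hf2 : 0 < f2) (hf2m : f2 < m2) (hr2 : 0 < r2) (hf1 : 0 < f1) (hf1m : f1 < m1) (hr1 : 0 < r1)
    (t : kˣ) (h : IsTruncMat k (f2 * r2) (f1 * r1)
      (actMat k α2 α1 β m2 r2 m1 r1 t (blockTriuOnes (f2 * r2) (f1 * r1)))) :
    t ^ (α1 * f1) = t ^ (α2 * f2) := by
  have hbr : 0 < f2 * r2 := Nat.mul_pos hf2 hr2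
  have hbc : 0 < f1 * r1 := Nat.mul_pos hf1 hr1
  have hbrm : f2 * r2 < m2 * r2 := Nat.mul_lt_mul_of_pos_right hf2m hr2
  have hbcm : f1 * r1 < m1 * r1 := Nat.mul_lt_mul_of_pos_right hf1m hr1
  -- compare the entries in the top-left corners of the first two diagonal blocks
  have hcorner := h.2 ⟨0, hbr.trans hbrm⟩ ⟨f2 * r2, hbrm⟩ ⟨0, hbc.trans hbcm⟩ ⟨f1 * r1, hbcm⟩
    (by simp [Nat.div_self hbr, Nat.div_self hbc]) (by simp) (by simp)
  simp only [actMat, blockTriuOnes, Matrix.of_apply, Nat.zero_div, le_refl, if_true, mul_one,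
    Nat.div_self hbr, Nat.div_self hbc, Nat.mul_div_cancel _ hr2, Nat.mul_div_cancel _ hr1,
    Nat.cast_zero, sub_zero, Units.val_inj] at hcorner
  rw [show β + α2 * (m2 - 1) - α1 * (m1 - 1)
      = β + α2 * (m2 - 1 - f2) - α1 * (m1 - 1 - f1) + α2 * f2 - α1 * f1 by ring,
    zpow_sub, zpow_add, mul_inv_eq_iff_eq_mul] at hcorner
  exact (mul_left_cancel hcorner).symm

end

theorem actMat_preserves_truncMat_iff
    [CharZero k]
    (m1 m2 r1 r2 : ℕ) (hm1 : 0 < m1) (hm2 : 0 < m2) (hr1 : 0 < r1) (hr2 : 0 < r2)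
    (α1 α2 : ℤ) :
    (∀ (t : kˣ) (x : Matrix (Fin (m2 * r2)) (Fin (m1 * r1)) k),
      IsTruncMat k ((m2 / Nat.gcd m1 m2) * r2) ((m1 / Nat.gcd m1 m2) * r1) x →
      IsTruncMat k ((m2 / Nat.gcd m1 m2) * r2) ((m1 / Nat.gcd m1 m2) * r1)
        (actMat k α2 α1 0 m2 r2 m1 r1 t x)) ↔
    (Nat.gcd m1 m2 = 1 ∨ α1 * m1 = α2 * m2) := by
  set g := Nat.gcd m1 m2
  have hg : 0 < g := Nat.gcd_pos_of_pos_left m2 hm1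
  have hf1 : 0 < m1 / g := Nat.div_pos (Nat.le_of_dvd hm1 (Nat.gcd_dvd_left m1 m2)) hg
  have hf2 : 0 < m2 / g := Nat.div_pos (Nat.le_of_dvd hm2 (Nat.gcd_dvd_right m1 m2)) hg
  have hcancel : α1 * m1 = α2 * m2 ↔ α1 * (m1 / g : ℕ) = α2 * (m2 / g : ℕ) := by
    have h1 : (m1 : ℤ) = g * (m1 / g : ℕ) := by
      exact_mod_cast (Nat.mul_div_cancel' (Nat.gcd_dvd_left m1 m2)).symm
    have h2 : (m2 : ℤ) = g * (m2 / g : ℕ) := by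
      exact_mod_cast (Nat.mul_div_cancel' (Nat.gcd_dvd_right m1 m2)).symm
    rw [h1, h2, mul_left_comm, mul_left_comm α2, mul_right_inj' (by positivity)]
  rw [hcancel]
  constructor
  · intro hpres
    refine or_iff_not_imp_left.2 fun hg1 => zpow_two_injective (k := k) ?_
    have hg2 : 1 < g := by omega
    have hpow := zpow_eq_zpow_of_isTruncMat_actMat hf2 (Nat.div_lt_self hm2 hg2) hr2 hf1
      (Nat.div_lt_self hm1 hg2) hr1 (Units.mk0 (2 : k) two_ne_zero)
      (hpres _ _ isTruncMat_blockTriuOnes)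
    simpa [Units.val_zpow_eq_zpow_val] using congrArg Units.val hpow
  · rintro (hg1 | hα) t x hx
    · exact isTruncMat_of_le (by simp [hg1]) (by simp [hg1]) _
    · exact isTruncMat_actMat_of_mul_eq hα hx

end
end

section
/- Let $m_1, m_2, r_1, r_2 \geq 1$ with $m_{12} = \gcd(m_1,m_2)$, $f_{21} = m_1/m_{12}$. Fix integers $\alpha_1, \alpha_2, \beta, \beta^*$ with $\alpha_1 m_1 = \alpha_2 m_2$. For $x \in \mathrm{Hom}_{k_{m_{12}}}(k_{m_1}^{\oplus r_1}, k_{m_2}^{\oplus r_2})$ and $y \in \mathrm{Hom}_{k_{m_{12}}}(k_{m_2}^{\oplus r_2}, k_{m_1}^{\oplus r_1})$, with the $\GG_m$-action $t * x = t^{\beta}\Phi_{m_2,r_2}(t^{\alpha_2})x\Phi_{m_1,r_1}(t^{\alpha_1})^{-1}$ and $t * y = t^{\beta^*}\Phi_{m_1,r_1}(t^{\alpha_1})y\Phi_{m_2,r_2}(t^{\alpha_2})^{-1}$, the trace pairing satisfies $\langle t*x, t*y \rangle = t^{\alpha_1 f_{21}(m_{12}-1) + \beta + \beta^*} \langle x,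 y \rangle$. -/
noncomputable section

variable (k : Type*) [Field k]

/-- The residue–trace pairing `⟨x, y⟩ = res(Tr_{k_{m₁₂}}(x y))` on the products of big
`k`-matrices in the chosen bases: the trace of the top-right block-diagonal of `Z`, namely
the sum of the entries `Z q v` with `q < br` and `v = (m₁₂ - 1)·br + q`. -/
def pairTR {n : ℕ} (m12 br : ℕ) (Z : Matrix (Fin n) (Fin n) k) : k :=
  ∑ q : Fin n, ∑ v : Fin n,
    if (q : ℕ) < br ∧ (v : ℕ) = (m12 - 1) * br + (q : ℕ) then Z q v else 0

/-! Both actions rescale matrix entries by powers of `t` depending only on the block row and the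
block column, with the middle weights `Φ_{m₁,r₁}(t^{α₁})` cancelling in the product. So the
`(q, v)` entry of `(t * x)(t * y)` is that of `xy` times `t^{β + β*}` and the ratio of the `q`-th
and `v`-th diagonal entries of `Φ_{m₂,r₂}(t^{α₂})`. The pairing only sees entries with `v` lying
`(m₁₂ - 1) f₁₂` blocks of size `r₂` below `q`, where this ratio is
`t^{α₂ f₁₂ (m₁₂ - 1)} = t^{α₁ f₂₁ (m₁₂ - 1)}` because `α₁ m₁ = α₂ m₂`. -/

/-- Exponent of `t` in the `q`-th diagonal entry of `Φ_{m,r}(t^α)`. -/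
def phiExp (α : ℤ) (m r q : ℕ) : ℤ := α * ((m : ℤ) - 1 - (q / r : ℕ))

theorem phiExp_sub_phiExp_mul_add (α : ℤ) (m : ℕ) {r : ℕ} (hr : 0 < r) (d q : ℕ) :
    phiExp α m r q - phiExp α m r (d * r + q) = α * d := by
  have hdiv : (d * r + q) / r = d + q / r := by
    rw [mul_comm, Nat.mul_add_div hr]
  simp only [phiExp, hdiv]
  push_cast
  ring

theorem mul_div_gcd_eq_of_mul_eq {α1 α2 : ℤ} {m1 m2 : ℕ} (hα : α1 * m1 = α2 * m2) :
    α1 * ((m1 / Nat.gcd m1 m2 : ℕ) : ℤ) = α2 * ((m2 / Nat.gcd m1 m2 : ℕ) : ℤ) := by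
  have h1 : (Nat.gcd m1 m2 : ℤ) ∣ m1 := Int.natCast_dvd_natCast.2 (Nat.gcd_dvd_left m1 m2)
  have h2 : (Nat.gcd m1 m2 : ℤ) ∣ m2 := Int.natCast_dvd_natCast.2 (Nat.gcd_dvd_right m1 m2)
  push_cast
  rw [← Int.mul_ediv_assoc _ h1, ← Int.mul_ediv_assoc _ h2, hα]

theorem Matrix.of_zpow_mul_mul_apply {R l m n : Type*} [CommRing R] [Fintype m] (t : Rˣ)
    (β β' : ℤ) (a : l → ℤ) (b : m → ℤ) (c : n → ℤ) (x : Matrix l m R) (y : Matrix m n R)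
    (i : l) (j : n) :
    (Matrix.of (fun i p => ((t ^ (β + a i - b p) : Rˣ) : R) * x i p) *
        Matrix.of (fun p j => ((t ^ (β' + b p - c j) : Rˣ) : R) * y p j)) i j
      = ((t ^ (β + β' + a i - c j) : Rˣ) : R) * (x * y) i j := by
  simp only [Matrix.mul_apply, Matrix.of_apply, Finset.mul_sum]
  refine Finset.sum_congr rfl fun p _ => ?_
  have hexp : β + β' + a i - c j = (β + a i - b p) + (β' + b p - c j) := by ring
  rw [mul_mul_mul_comm, ← Units.val_mul, ← _root_.zpow_add, ← hexp]

theorem actMat_mul_actMat_apply (α1 α2 β βs : ℤ) (m1 m2 r1 r2 : ℕ) (t : kˣ)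
    (x : Matrix (Fin (m2 * r2)) (Fin (m1 * r1)) k) (y : Matrix (Fin (m1 * r1)) (Fin (m2 * r2)) k)
    (q v : Fin (m2 * r2)) :
    (actMat k α2 α1 β m2 r2 m1 r1 t x * actMat k α1 α2 βs m1 r1 m2 r2 t y) q v
      = ((t ^ (β + βs + phiExp α2 m2 r2 q - phiExp α2 m2 r2 v) : kˣ) : k) * (x * y) q v :=
  Matrix.of_zpow_mul_mul_apply t β βs (fun q : Fin (m2 * r2) => phiExp α2 m2 r2 q)
    (fun p : Fin (m1 * r1) => phiExp α1 m1 r1 p) (fun v : Fin (m2 * r2) => phiExp α2 m2 r2 v) x y q v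

theorem pairTR_eq_mul_of_apply {n : ℕ} (m12 br : ℕ) (c : k) {Z Z' : Matrix (Fin n) (Fin n) k}
    (h : ∀ q v : Fin n, (q : ℕ) < br → (v : ℕ) = (m12 - 1) * br + q → Z' q v = c * Z q v) :
    pairTR k m12 br Z' = c * pairTR k m12 br Z := by
  simp only [pairTR, Finset.mul_sum]
  refine Finset.sum_congr rfl fun q _ => Finset.sum_congr rfl fun v _ => ?_
  split_ifs with hqv
  · exact h q v hqv.1 hqv.2
  · rw [mul_zero]

theorem pair_actMat_eq_zpow_smul_pair
    (m1 m2 r1 r2 : ℕ)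
    (α1 α2 β βs : ℤ) (hα : α1 * m1 = α2 * m2) (t : kˣ)
    (x : Matrix (Fin (m2 * r2)) (Fin (m1 * r1)) k)
    (y : Matrix (Fin (m1 * r1)) (Fin (m2 * r2)) k) :
    pairTR k (Nat.gcd m1 m2) ((m2 / Nat.gcd m1 m2) * r2)
        (actMat k α2 α1 β m2 r2 m1 r1 t x * actMat k α1 α2 βs m1 r1 m2 r2 t y)
      = ((t ^ (α1 * ((m1 / Nat.gcd m1 m2 : ℕ) : ℤ) * ((Nat.gcd m1 m2 : ℤ) - 1) + β + βs)
          : kˣ) : k)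
        * pairTR k (Nat.gcd m1 m2) ((m2 / Nat.gcd m1 m2) * r2) (x * y) := by
  set g := Nat.gcd m1 m2
  refine pairTR_eq_mul_of_apply k g _ _ fun q v hq hv => ?_
  have hg : 0 < g := Nat.pos_of_ne_zero fun h0 => by simp [g, h0] at hq
  have hr2 : 0 < r2 := Nat.pos_of_ne_zero fun h0 => by simp [h0] at hq
  have hweight : phiExp α2 m2 r2 q - phiExp α2 m2 r2 v = α1 * ((m1 / g : ℕ) : ℤ) * ((g : ℤ) - 1) := by
    rw [hv, ← mul_assoc, phiExp_sub_phiExp_mul_add α2 m2 hr2, mul_div_gcd_eq_of_mul_eq hα,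
      Nat.cast_mul, Nat.cast_sub hg]
    push_cast
    ring
  rw [actMat_mul_actMat_apply, add_sub_assoc, hweight, add_comm (β + βs), ← add_assoc]

end
end
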